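/- Let n ≥ 1 be an integer with n ≡ 1 (mod 4). Then for every integer k ≥ 1 one has the upper bound I_{n,k} < ((2k+1)/n²)·(π/2)^{2k}. -/

import Mathlib

open Real MeasureTheory

/-!
Writing `S_p = ∫₀^{π/2} t^p sin(nt)` and `C_p = ∫₀^{π/2} t^p cos(nt)`, integration by parts gives
`S_{p+1} = (p+1)/n · C_p` and `C_{p+1} = (π/2)^{p+1}/n - (p+1)/n · S_p`, since `n ≡ 1 (mod 4)`
makes `cos(nπ/2) = 0` and `sin(nπ/2) = 1`. Hence
`I_{n,k+1} = (2k+3)/n² · ((π/2)^{2k+2} - (2k+2) I_{n,k})`, and the bound amounts to `I_{n,k} > 0`.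
That follows from the same identity together with `S_p < ∫₀^{π/2} t^p = (π/2)^{p+1}/(p+1)`,
and from `I_{n,0} = 1/n²`.
-/

/-- `I_{n,k} = ∫₀^{π/2} t^{2k+1} sin(nt) dt`. -/
noncomputable def I (n k : ℕ) : ℝ :=
  ∫ t in (0:ℝ)..(π / 2), t ^ (2 * k + 1) * Real.sin ((n : ℝ) * t)

section Moments

variable {ω : ℝ} (b : ℝ) (p : ℕ)

theorem hasDerivAt_pow_succ (t : ℝ) :
    HasDerivAt (fun t : ℝ => t ^ (p + 1)) ((p + 1) * t ^ p) t := by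
  simpa using hasDerivAt_pow (p + 1) t

theorem integral_pow_succ_mul_sin (hω : ω ≠ 0) :
    ∫ t in (0:ℝ)..b, t ^ (p + 1) * sin (ω * t)
      = -(b ^ (p + 1) * cos (ω * b)) / ω
        + (p + 1) / ω * ∫ t in (0:ℝ)..b, t ^ p * cos (ω * t) := by
  have hv (t : ℝ) : HasDerivAt (fun t => -cos (ω * t) / ω) (sin (ω * t)) t :=
    (((hasDerivAt_id' t).const_mul ω).cos.neg.div_const ω).congr_deriv (by field_simp)
  have hrest : ∫ t in (0:ℝ)..b, (p + 1) * t ^ p * (-cos (ω * t) / ω)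
      = -((p + 1) / ω * ∫ t in (0:ℝ)..b, t ^ p * cos (ω * t)) := by
    rw [← intervalIntegral.integral_const_mul, ← intervalIntegral.integral_neg]
    exact intervalIntegral.integral_congr fun t _ => by ring
  rw [intervalIntegral.integral_mul_deriv_eq_deriv_mul (fun t _ => hasDerivAt_pow_succ p t)
    (fun t _ => hv t)
    (by apply Continuous.intervalIntegrable; fun_prop)
    (by apply Continuous.intervalIntegrable; fun_prop), hrest]
  simp only [zero_pow p.succ_ne_zero, zero_mul, sub_zero]
  ring

theorem integral_pow_succ_mul_cos (hω : ω ≠ 0) :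
    ∫ t in (0:ℝ)..b, t ^ (p + 1) * cos (ω * t)
      = b ^ (p + 1) * sin (ω * b) / ω
        - (p + 1) / ω * ∫ t in (0:ℝ)..b, t ^ p * sin (ω * t) := by
  have hv (t : ℝ) : HasDerivAt (fun t => sin (ω * t) / ω) (cos (ω * t)) t :=
    (((hasDerivAt_id' t).const_mul ω).sin.div_const ω).congr_deriv (by field_simp)
  have hrest : ∫ t in (0:ℝ)..b, (p + 1) * t ^ p * (sin (ω * t) / ω)
      = (p + 1) / ω * ∫ t in (0:ℝ)..b, t ^ p * sin (ω * t) := by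
    rw [← intervalIntegral.integral_const_mul]
    exact intervalIntegral.integral_congr fun t _ => by ring
  rw [intervalIntegral.integral_mul_deriv_eq_deriv_mul (fun t _ => hasDerivAt_pow_succ p t)
    (fun t _ => hv t)
    (by apply Continuous.intervalIntegrable; fun_prop)
    (by apply Continuous.intervalIntegrable; fun_prop), hrest]
  simp only [zero_pow p.succ_ne_zero, zero_mul, sub_zero]
  ring

theorem integral_pow_mul_sin_lt (hω : 0 < ω) (hb : 0 < b) :
    ∫ t in (0:ℝ)..b, t ^ p * sin (ω * t) < b ^ (p + 1) / (p + 1) := by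
  set c := min b ω⁻¹
  have hc : 0 < c := lt_min hb (inv_pos.mpr hω)
  have hωc : ω * c ≤ 1 := by
    simpa [hω.ne'] using mul_le_mul_of_nonneg_left (min_le_right b ω⁻¹) hω.le
  have hsin : sin (ω * c) < 1 := (sin_lt (by positivity)).trans_le hωc
  calc ∫ t in (0:ℝ)..b, t ^ p * sin (ω * t) < ∫ t in (0:ℝ)..b, t ^ p :=
        intervalIntegral.integral_lt_integral_of_continuousOn_of_le_of_exists_lt hb
          (by fun_prop) (by fun_prop)
          (fun t ht => mul_le_of_le_one_right (pow_nonneg ht.1.le p) (sin_le_one _))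
          ⟨c, ⟨hc.le, min_le_left b ω⁻¹⟩, mul_lt_of_lt_one_right (by positivity) hsin⟩
    _ = b ^ (p + 1) / (p + 1) := by simp [integral_pow]

end Moments

section ModFourEqOne

variable {n : ℕ}

theorem nat_mul_pi_div_two_of_mod_four_eq_one (hn4 : n % 4 = 1) :
    (n : ℝ) * (π / 2) = π / 2 + (n / 4 : ℕ) * (2 * π) := by
  obtain ⟨m, rfl⟩ : ∃ m, n = 4 * m + 1 := ⟨n / 4, by omega⟩
  rw [show (4 * m + 1) / 4 = m by omega]
  push_cast
  ring

theorem cos_nat_mul_pi_div_two_of_mod_four_eq_one (hn4 : n % 4 = 1) : cos (n * (π / 2)) = 0 := by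
  rw [nat_mul_pi_div_two_of_mod_four_eq_one hn4, cos_add_nat_mul_two_pi, cos_pi_div_two]

theorem sin_nat_mul_pi_div_two_of_mod_four_eq_one (hn4 : n % 4 = 1) : sin (n * (π / 2)) = 1 := by
  rw [nat_mul_pi_div_two_of_mod_four_eq_one hn4, sin_add_nat_mul_two_pi, sin_pi_div_two]

theorem I_zero (hn4 : n % 4 = 1) : I n 0 = 1 / n ^ 2 := by
  have hn : (n : ℝ) ≠ 0 := by exact_mod_cast (show n ≠ 0 by omega)
  unfold I
  rw [integral_pow_succ_mul_sin _ _ hn, cos_nat_mul_pi_div_two_of_mod_four_eq_one hn4]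
  simp only [mul_zero, pow_zero, one_mul, zero_add, Nat.cast_zero, neg_zero, zero_div]
  rw [intervalIntegral.integral_comp_mul_left (fun x => cos x) hn, integral_cos,
    sin_nat_mul_pi_div_two_of_mod_four_eq_one hn4, mul_zero, sin_zero, sub_zero, smul_eq_mul]
  field_simp

theorem I_succ (hn4 : n % 4 = 1) (k : ℕ) :
    I n (k + 1) = (2 * ((k + 1 : ℕ) : ℝ) + 1) / n ^ 2
      * ((π / 2) ^ (2 * (k + 1)) - 2 * ((k + 1 : ℕ) : ℝ) * I n k) := by
  have hn : (n : ℝ) ≠ 0 := by exact_mod_cast (show n ≠ 0 by omega)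
  unfold I
  rw [show 2 * (k + 1) + 1 = (2 * k + 1 + 1) + 1 by ring, integral_pow_succ_mul_sin _ _ hn,
    integral_pow_succ_mul_cos _ _ hn, cos_nat_mul_pi_div_two_of_mod_four_eq_one hn4,
    sin_nat_mul_pi_div_two_of_mod_four_eq_one hn4]
  push_cast
  field_simp
  ring

theorem I_pos (hn4 : n % 4 = 1) (k : ℕ) : 0 < I n k := by
  have hn : (0 : ℝ) < n := by exact_mod_cast (show 0 < n by omega)
  cases k with
  | zero => rw [I_zero hn4]; positivity
  | succ k =>
    have hlt : I n k < (π / 2) ^ (2 * k + 1 + 1) / ((2 * k + 1 : ℕ) + 1) :=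
      integral_pow_mul_sin_lt _ _ hn (by positivity)
    rw [I_succ hn4]
    refine mul_pos (by positivity) (sub_pos.mpr ?_)
    rw [lt_div_iff₀ (by positivity)] at hlt
    rw [show 2 * (k + 1) = 2 * k + 1 + 1 by ring]
    push_cast at hlt ⊢
    linarith

end ModFourEqOne

theorem I_upper_bound_general (n k : ℕ) (hn4 : n % 4 = 1) (hk : 1 ≤ k) :
    I n k < ((2 * (k : ℝ) + 1) / (n : ℝ) ^ 2) * (π / 2) ^ (2 * k) := by
  obtain ⟨m, rfl⟩ : ∃ m, k = m + 1 := ⟨k - 1, by omega⟩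
  have hn : (0 : ℝ) < n := by exact_mod_cast (show 0 < n by omega)
  rw [I_succ hn4]
  exact mul_lt_mul_of_pos_left (sub_lt_self _ (mul_pos (by positivity) (I_pos hn4 m)))
    (by positivity)

/-- For `n ≡ 1 (mod 4)` and `k ≥ 1`, `I_{n,k} < ((2k+1)/n²) (π/2)^{2k}`. -/
theorem I_upper_bound (n k : ℕ) (hn : 1 ≤ n) (hn4 : n % 4 = 1) (hk : 1 ≤ k) :
    I n k < ((2 * (k : ℝ) + 1) / (n : ℝ) ^ 2) * (π / 2) ^ (2 * k) :=
  I_upper_bound_general n k hn4 hk
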